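/- arXiv:2212.08712 — 5 statements merged into one kernel-verified Lean document; each statement's English description precedes it below -/
import Mathlib

section
/- Gumbel-Max trick for categorical sampling: let S be a finite nonempty type, let p be a strictly positive probability vector on S, and let G be distributed according to μ_G^S. Then for every i ∈ S, the probability of the event { g : S → ℝ | i is the strict argmax of (log ∘ p) + g } equals p i. In particular, the map g ↦ argmax_{s} (log (p s) + g s) pushes μ_G^S forward (on the full-measure set where the strict argmax exists) to the categorical distribution with probability vector p. -/
/-!
Conditioning on `g i = t`, the event says that every other `g j` lies below
`t + log p i - log p j`, which for the Gumbel CDF `F t = exp (-exp (-t))` has probability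
`F t ^ (p j / p i)`. By independence the conditional probability is `F t ^ (1 / p i - 1)`, and
since `F (g i)` is uniform on `(0, 1)` its expectation is `∫₀¹ u ^ (1 / p i - 1) du = p i`.
-/

open MeasureTheory Real

/-- The uniform probability measure on the open interval (0,1). -/
noncomputable def uniform01 : Measure ℝ := volume.restrict (Set.Ioo (0 : ℝ) 1)

/-- The standard Gumbel distribution on ℝ: the pushforward of the uniform
measure on (0,1) under `u ↦ -log(-log u)`; its CDF is `x ↦ exp (-exp (-x))`. -/
noncomputable def stdGumbel : Measure ℝ :=
  uniform01.map (fun u : ℝ => -Real.log (-Real.log u))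

/-- The product measure on `S → ℝ` with i.i.d. standard Gumbel coordinates. -/
noncomputable def gumbelPi (S : Type*) [Fintype S] : Measure (S → ℝ) :=
  Measure.pi (fun _ : S => stdGumbel)

instance : IsFiniteMeasure uniform01 := by
  unfold uniform01; infer_instance

instance : IsFiniteMeasure stdGumbel := by
  unfold stdGumbel; infer_instance

noncomputable def gumbelCDF (x : ℝ) : ℝ := exp (-exp (-x))

lemma gumbelCDF_pos (x : ℝ) : 0 < gumbelCDF x := exp_pos _

lemma strictMono_gumbelCDF : StrictMono gumbelCDF := fun x y hxy => by
  unfold gumbelCDF; gcongr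

@[fun_prop]
lemma measurable_gumbelCDF : Measurable gumbelCDF := by
  unfold gumbelCDF; fun_prop

lemma gumbelCDF_sub_log (x : ℝ) {r : ℝ} (hr : 0 < r) :
    gumbelCDF (x - log r) = gumbelCDF x ^ r := by
  rw [gumbelCDF, gumbelCDF, rpow_def_of_pos (exp_pos _), log_exp, neg_sub', sub_neg_eq_add,
    exp_add, exp_log hr]
  ring_nf

lemma gumbelCDF_neg_log_neg_log {u : ℝ} (hu : u ∈ Set.Ioo 0 1) :
    gumbelCDF (-log (-log u)) = u := by
  have : 0 < -log u := neg_pos.mpr (log_neg hu.1 hu.2)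
  rw [gumbelCDF, neg_neg, exp_log this, neg_neg, exp_log hu.1]

lemma map_gumbelCDF_stdGumbel : stdGumbel.map gumbelCDF = uniform01 := by
  have hq : Measurable fun u : ℝ => -log (-log u) := by fun_prop
  rw [stdGumbel, Measure.map_map measurable_gumbelCDF hq]
  conv_rhs => rw [← Measure.map_id (μ := uniform01)]
  refine Measure.map_congr ?_
  filter_upwards [ae_restrict_mem measurableSet_Ioo] with u hu
  exact gumbelCDF_neg_log_neg_log hu

lemma uniform01_Iio {y : ℝ} (hy : y ≤ 1) : uniform01 (Set.Iio y) = ENNReal.ofReal y := by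
  rw [uniform01, Measure.restrict_apply measurableSet_Iio, Set.Iio_inter_Ioo, volume_Ioo,
    min_eq_left hy, sub_zero]

lemma stdGumbel_Iio (x : ℝ) : stdGumbel (Set.Iio x) = ENNReal.ofReal (gumbelCDF x) := by
  have hpre : gumbelCDF ⁻¹' Set.Iio (gumbelCDF x) = Set.Iio x := by
    ext y; exact strictMono_gumbelCDF.lt_iff_lt
  have hle : gumbelCDF x ≤ 1 := exp_le_one_iff.mpr (neg_nonpos.mpr (exp_pos _).le)
  rw [← uniform01_Iio hle,
    ← map_gumbelCDF_stdGumbel, Measure.map_apply measurable_gumbelCDF measurableSet_Iio, hpre]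

lemma lintegral_uniform01_rpow {a : ℝ} (ha : -1 < a) :
    ∫⁻ u, ENNReal.ofReal (u ^ a) ∂uniform01 = ENNReal.ofReal (1 / (a + 1)) := by
  have hint : IntegrableOn (fun u : ℝ => u ^ a) (Set.Ioc 0 1) :=
    (intervalIntegral.intervalIntegrable_rpow' ha).1
  rw [uniform01, ← ofReal_integral_eq_lintegral_ofReal (hint.mono_set Set.Ioo_subset_Ioc_self)
    (by filter_upwards [ae_restrict_mem measurableSet_Ioo] with u hu
        exact rpow_nonneg hu.1.le a),
    integral_Ioc_eq_integral_Ioo.symm, ← intervalIntegral.integral_of_le zero_le_one,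
    integral_rpow (Or.inl ha), one_rpow, zero_rpow (by linarith), sub_zero]

lemma lintegral_stdGumbel_gumbelCDF_rpow {a : ℝ} (ha : -1 < a) :
    ∫⁻ t, ENNReal.ofReal (gumbelCDF t ^ a) ∂stdGumbel = ENNReal.ofReal (1 / (a + 1)) := by
  rw [← lintegral_uniform01_rpow ha, ← map_gumbelCDF_stdGumbel,
    lintegral_map (by fun_prop) measurable_gumbelCDF]

lemma MeasureTheory.Measure.pi_setOf_forall_ne_lt_add {S : Type*} [Fintype S] [DecidableEq S]
    (μ : S → Measure ℝ) [∀ j, SigmaFinite (μ j)] (i : S) (d : S → ℝ) :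
    Measure.pi μ {g | ∀ j, j ≠ i → g j < g i + d j}
      = ∫⁻ t, ∏ j ∈ Finset.univ.erase i, μ j (Set.Iio (t + d j)) ∂μ i := by
  set B := {g : S → ℝ | ∀ j, j ≠ i → g j < g i + d j}
  set e := MeasurableEquiv.piEquivPiSubtypeProd (fun _ : S => ℝ) (· = i)
  have hB : MeasurableSet B := by
    simp only [B, Set.ofPred_forall]
    exact .iInter fun j => .iInter fun _ => measurableSet_lt (by fun_prop) (by fun_prop)
  have hsection : ∀ x : {j // j = i} → ℝ, Prod.mk x ⁻¹' (e.symm ⁻¹' B)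
      = Set.univ.pi fun j : {j // ¬ j = i} => Set.Iio (x ⟨i, rfl⟩ + d j) := by
    intro x
    ext v
    simp only [Set.mem_preimage, Set.mem_ofPred_eq, Set.mem_pi, Set.mem_univ, Set.mem_Iio,
      forall_const, B]
    have hsymm : ∀ j, e.symm (x, v) j = if h : j = i then x ⟨j, h⟩ else v ⟨j, h⟩ :=
      fun _ => rfl
    refine ⟨fun h j => ?_, fun h j hj => ?_⟩
    · simpa [hsymm, j.2] using h j j.2
    · simpa [hsymm, hj] using h ⟨j, hj⟩
  conv_lhs => rw [← e.symm.symm_preimage_preimage B, e.symm_symm]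
  rw [(measurePreserving_piEquivPiSubtypeProd μ (· = i)).measure_preimage_equiv,
    Measure.prod_apply (e.symm.measurable hB)]
  simp_rw [hsection, Measure.pi_pi]
  have hprod : ∀ t, ∏ j : {j // ¬ j = i}, μ j (Set.Iio (t + d j))
      = ∏ j ∈ Finset.univ.erase i, μ j (Set.Iio (t + d j)) :=
    fun t => (Finset.prod_subtype (p := (¬ · = i)) _ (fun _ => by simp)
      fun j => μ j (Set.Iio (t + d j))).symm
  simp_rw [hprod]
  convert (measurePreserving_piUnique fun j : {j // j = i} => μ j).lintegral_comp_emb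
    (MeasurableEquiv.measurableEmbedding _)
    fun t => ∏ j ∈ Finset.univ.erase i, μ j (Set.Iio (t + d j)) <;> rfl

theorem gumbelMax_categorical_general (S : Type*) [Fintype S]
    (p : S → ℝ) (hpos : ∀ s, 0 < p s) (hsum : ∑ s, p s = 1) (i : S) :
    gumbelPi S {g : S → ℝ | ∀ j : S, j ≠ i →
        Real.log (p j) + g j < Real.log (p i) + g i}
      = ENNReal.ofReal (p i) := by
  classical
  have hset : {g : S → ℝ | ∀ j, j ≠ i → log (p j) + g j < log (p i) + g i}
      = {g | ∀ j, j ≠ i → g j < g i + (log (p i) - log (p j))} := by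
    ext g
    refine forall₂_congr fun j _ => ?_
    constructor <;> intro h <;> linarith
  have hfactor (t : ℝ) (j : S) : stdGumbel (Set.Iio (t + (log (p i) - log (p j))))
      = ENNReal.ofReal (gumbelCDF t ^ (p j / p i)) := by
    rw [stdGumbel_Iio, ← gumbelCDF_sub_log t (div_pos (hpos j) (hpos i)),
      log_div (hpos j).ne' (hpos i).ne', sub_sub_eq_add_sub, add_sub_assoc]
  have hexponent : ∑ j ∈ Finset.univ.erase i, p j / p i = 1 / p i - 1 := by
    rw [← Finset.sum_div, Finset.sum_erase_eq_sub (Finset.mem_univ i), hsum, sub_div,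
      div_self (hpos i).ne']
  have hexponent_gt : -1 < 1 / p i - 1 := by
    linarith [one_div_pos.mpr (hpos i)]
  calc gumbelPi S _
      = ∫⁻ t, ∏ j ∈ Finset.univ.erase i,
          stdGumbel (Set.Iio (t + (log (p i) - log (p j)))) ∂stdGumbel := by
        rw [hset]; exact Measure.pi_setOf_forall_ne_lt_add _ i _
    _ = ∫⁻ t, ENNReal.ofReal (gumbelCDF t ^ (1 / p i - 1)) ∂stdGumbel := by
        simp_rw [hfactor,
          ← ENNReal.ofReal_prod_of_nonneg fun _ _ => (rpow_pos_of_pos (gumbelCDF_pos _) _).le,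
          ← rpow_sum_of_pos (gumbelCDF_pos _), hexponent]
    _ = ENNReal.ofReal (p i) := by
        rw [lintegral_stdGumbel_gumbelCDF_rpow hexponent_gt, sub_add_cancel, one_div_one_div]

/-- Gumbel-Max trick: if `p` is a strictly positive probability vector on the
finite nonempty type `S` and the noise `g` is i.i.d. standard Gumbel, then for
every `i`, the probability that `i` is the strict argmax of `log ∘ p + g`
equals `p i`; i.e. the Gumbel-Max mechanism samples from the categorical
distribution with probability vector `p`. -/
theorem gumbelMax_categorical (S : Type*) [Fintype S] [Nonempty S]
    (p : S → ℝ) (hpos : ∀ s, 0 < p s) (hsum : ∑ s, p s = 1) (i : S) :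
    gumbelPi S {g : S → ℝ | ∀ j : S, j ≠ i →
        Real.log (p j) + g j < Real.log (p i) + g i}
      = ENNReal.ofReal (p i) :=
  gumbelMax_categorical_general S p hpos hsum i
end

section
/- Correctness of the Gumbel-Max SCM encoding of an MDP: with the trajectory X_0(ω), …, X_{T−1}(ω) defined by the Gumbel-Max recursion, for every 1 ≤ k ≤ T and every finite state sequence τ_0, …, τ_{k−1} ∈ S, the probability (under the product Gumbel noise measure) of the event { ω : X_t(ω) = τ_t for all 0 ≤ t < k } equals ρ(τ_0) · ∏_{t=0}^{k−2} K(τ_t)(π(τ_t))(τ_{t+1}). In particular, realizations of the Gumbel-Max SCM have exactly the path probabilities of the MDP under policy π, and the cylinder set of trajectories extending a finite prefix τ has probability equal to the MDP probability of τ. -/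
open MeasureTheory Real

open Classical in
/-- The strict argmax of `s ↦ c s + g s`, when it exists (arbitrary otherwise). -/
noncomputable def strictArgmax {S : Type*} [Fintype S] [Nonempty S]
    (c g : S → ℝ) : S :=
  if h : ∃ i : S, ∀ j : S, j ≠ i → c j + g j < c i + g i then h.choose
  else Classical.arbitrary S

/-- The Gumbel-Max SCM trajectory of an MDP with initial distribution `ρ`,
transition kernel `K`, deterministic policy `pol`, driven by the exogenous
noise sequence `ω`. -/
noncomputable def gmTraj {S : Type*} [Fintype S] [Nonempty S] {A : Type*}
    (ρ : S → ℝ) (K : S → A → S → ℝ) (pol : S → A) (ω : ℕ → S → ℝ) : ℕ → S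
  | 0 => strictArgmax (fun s => Real.log (ρ s)) (ω 0)
  | t + 1 =>
      strictArgmax
        (fun s => Real.log (K (gmTraj ρ K pol ω t) (pol (gmTraj ρ K pol ω t)) s))
        (ω (t + 1))

/-- Extend a finitely-indexed noise vector to an ℕ-indexed one (zero outside). -/
def extendNoise {S : Type*} (T : ℕ) (ω : Fin T → S → ℝ) : ℕ → S → ℝ :=
  fun t => if h : t < T then ω ⟨t, h⟩ else fun _ => 0


/-!
Conditioning on the `i`-th Gumbel coordinate `x`, the event that `log p + g` has its strict
argmax at `i` asks each other coordinate to lie below `x + log p i - log p j`; by the Gumbel CDF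
this has probability `∏ j ≠ i, exp (-(p j / p i) e^{-x}) = exp (-a e^{-x})` with
`a = (1 - p i) / p i`. Since `e^{-G}` is a standard exponential variable,
`E [exp (-a e^{-G})] = 1 / (1 + a) = p i`. Along a fixed path `τ` the Gumbel-Max trajectory
follows `τ` exactly when each step's noise selects `τ t`, and the noise at different steps is
independent, so the cylinder probability is the product of these one-step probabilities.
-/

open Set

theorem MeasureTheory.Measure.pi_forall_ne_mem_eq_lintegral {ι α : Type*} [Fintype ι]
    [DecidableEq ι] [MeasurableSpace α] (μ : ι → Measure α) [∀ j, SigmaFinite (μ j)] (i : ι)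
    (F : ι → α → Set α) (hF : ∀ j, MeasurableSet {q : α × α | q.2 ∈ F j q.1}) :
    Measure.pi μ {u | ∀ j ≠ i, u j ∈ F j (u i)}
      = ∫⁻ x, ∏ j ∈ Finset.univ.erase i, μ j (F j x) ∂μ i := by
  set E : Set (({j // j = i} → α) × ({j // ¬j = i} → α)) :=
    {q | ∀ j : {j // ¬j = i}, q.2 j ∈ F j (q.1 ⟨i, rfl⟩)}
  have hE : MeasurableSet E := by
    simp only [E, ofPred_forall]
    exact MeasurableSet.iInter fun j => (hF j).preimage
      (f := fun q : ({j // j = i} → α) × ({j // ¬j = i} → α) => (q.1 ⟨i, rfl⟩, q.2 j))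
      (by fun_prop)
  have hpre : {u | ∀ j ≠ i, u j ∈ F j (u i)}
      = MeasurableEquiv.piEquivPiSubtypeProd (fun _ => α) (· = i) ⁻¹' E := by
    ext u
    simp [E, MeasurableEquiv.piEquivPiSubtypeProd, Equiv.piEquivPiSubtypeProd]
  have hslice (y : {j // j = i} → α) :
      Prod.mk y ⁻¹' E = univ.pi fun j : {j // ¬j = i} => F j (y ⟨i, rfl⟩) := by
    ext v
    simp [E]
  rw [hpre, (measurePreserving_piEquivPiSubtypeProd μ (· = i)).measure_preimage
    hE.nullMeasurableSet, Measure.prod_apply hE]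
  refine Eq.trans ?_ ((measurePreserving_piUnique fun j : {j // j = i} => μ j).lintegral_comp_emb
    (MeasurableEquiv.piUnique _).measurableEmbedding
    fun x => ∏ j ∈ Finset.univ.erase i, μ j (F j x))
  congr 1
  · -- the two sides carry different `Fintype {j // j = i}` instances
    congr
    exact Subsingleton.elim _ _
  · funext y
    rw [hslice, Measure.pi_pi]
    exact (Finset.prod_subtype _ (fun j => by simp) fun j => μ j (F j (y ⟨i, rfl⟩))).symm

section Gumbel

lemma measurable_neg_log_neg_log : Measurable fun u : ℝ => -log (-log u) := by
  fun_prop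

instance : IsProbabilityMeasure stdGumbel :=
  have : IsProbabilityMeasure uniform01 := ⟨by simp [uniform01]⟩
  Measure.isProbabilityMeasure_map measurable_neg_log_neg_log.aemeasurable

instance (S : Type*) [Fintype S] : IsProbabilityMeasure (gumbelPi S) := by
  unfold gumbelPi
  infer_instance

lemma neg_log_neg_log_lt_iff {u y : ℝ} (hu : u ∈ Ioo 0 1) :
    -log (-log u) < y ↔ u < exp (-exp (-y)) := by
  have hlog : 0 < -log u := neg_pos.2 (log_neg hu.1 hu.2)
  rw [neg_lt, lt_log_iff_exp_lt hlog, lt_neg, ← log_lt_iff_lt_exp hu.1]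

theorem stdGumbel_Iio_s3 (y : ℝ) : stdGumbel (Iio y) = ENNReal.ofReal (exp (-exp (-y))) := by
  have hpre : (fun u : ℝ => -log (-log u)) ⁻¹' Iio y ∩ Ioo 0 1 = Ioo 0 (exp (-exp (-y))) := by
    ext u
    constructor
    · rintro ⟨hy, hu⟩
      exact ⟨hu.1, (neg_log_neg_log_lt_iff hu).1 hy⟩
    · rintro ⟨hu0, hu⟩
      have hu1 : u < 1 := hu.trans (exp_lt_one_iff.2 (neg_neg_of_pos (exp_pos _)))
      exact ⟨(neg_log_neg_log_lt_iff ⟨hu0, hu1⟩).2 hu, hu0, hu1⟩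
  rw [stdGumbel, Measure.map_apply measurable_neg_log_neg_log measurableSet_Iio, uniform01,
    Measure.restrict_apply' measurableSet_Ioo, hpre, Real.volume_Ioo, sub_zero]

lemma lintegral_Ioo_rpow {a : ℝ} (ha : 0 ≤ a) :
    ∫⁻ u in Ioo 0 1, ENNReal.ofReal (u ^ a) = ENNReal.ofReal (a + 1)⁻¹ := by
  have hint : IntegrableOn (fun u : ℝ => u ^ a) (Ioc 0 1) :=
    (intervalIntegrable_iff_integrableOn_Ioc_of_le zero_le_one).1
      (intervalIntegral.intervalIntegrable_rpow' (by linarith))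
  rw [← ofReal_integral_eq_lintegral_ofReal (hint.mono_set Ioo_subset_Ioc_self)
      ((ae_restrict_iff' measurableSet_Ioo).2 (.of_forall fun u hu => rpow_nonneg hu.1.le a)),
    ← integral_Ioc_eq_integral_Ioo, ← intervalIntegral.integral_of_le zero_le_one,
    integral_rpow (Or.inl (by linarith))]
  simp [zero_rpow (by linarith : a + 1 ≠ 0)]

theorem lintegral_exp_neg_mul_exp_neg_stdGumbel {a : ℝ} (ha : 0 ≤ a) :
    ∫⁻ x, ENNReal.ofReal (exp (-(a * exp (-x)))) ∂stdGumbel = ENNReal.ofReal (a + 1)⁻¹ := by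
  rw [stdGumbel, lintegral_map (by fun_prop) measurable_neg_log_neg_log, uniform01,
    ← lintegral_Ioo_rpow ha]
  refine setLIntegral_congr_fun measurableSet_Ioo fun u hu => ?_
  rw [neg_neg, exp_log (neg_pos.2 (log_neg hu.1 hu.2)), rpow_def_of_pos hu.1]
  ring_nf

variable {S : Type*} [Fintype S]

lemma le_one_of_sum_eq_one {p : S → ℝ} (hp : ∀ s, 0 ≤ p s) (hsum : ∑ s, p s = 1) (i : S) :
    p i ≤ 1 :=
  hsum ▸ Finset.single_le_sum (fun s _ => hp s) (Finset.mem_univ i)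

theorem gumbelPi_forall_ne_lt (p : S → ℝ) (hp : ∀ s, 0 < p s) (hsum : ∑ s, p s = 1) (i : S) :
    gumbelPi S {g | ∀ j ≠ i, log (p j) + g j < log (p i) + g i} = ENNReal.ofReal (p i) := by
  classical
  have hset : {g : S → ℝ | ∀ j ≠ i, log (p j) + g j < log (p i) + g i}
      = {g | ∀ j ≠ i, g j ∈ Iio (log (p i) - log (p j) + g i)} := by
    ext g
    simp only [mem_ofPred_eq, mem_Iio]
    refine forall₂_congr fun j _ => ?_
    constructor <;> intro h <;> linarith
  have hexp (j : S) (x : ℝ) : exp (-(log (p i) - log (p j) + x)) = p j / p i * exp (-x) := by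
    rw [neg_add, exp_add, neg_sub, exp_sub, exp_log (hp j), exp_log (hp i)]
  have hsum_ne : ∑ j ∈ Finset.univ.erase i, p j / p i = (1 - p i) / p i := by
    rw [← Finset.sum_div, Finset.sum_erase_eq_sub (Finset.mem_univ i), hsum]
  have hslices (x : ℝ) : ∏ j ∈ Finset.univ.erase i, stdGumbel (Iio (log (p i) - log (p j) + x))
      = ENNReal.ofReal (exp (-((1 - p i) / p i * exp (-x)))) := by
    simp_rw [stdGumbel_Iio_s3, hexp]
    rw [← ENNReal.ofReal_prod_of_nonneg fun _ _ => (exp_pos _).le, ← exp_sum,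
      Finset.sum_neg_distrib, ← Finset.sum_mul, hsum_ne]
  have ha : 0 ≤ (1 - p i) / p i :=
    div_nonneg (sub_nonneg.2 (le_one_of_sum_eq_one (fun s => (hp s).le) hsum i)) (hp i).le
  rw [hset, gumbelPi, Measure.pi_forall_ne_mem_eq_lintegral _ i
      (fun j x => Iio (log (p i) - log (p j) + x))
      fun j => measurableSet_lt (f := Prod.snd) (g := fun q => log (p i) - log (p j) + q.1)
        (by fun_prop) (by fun_prop)]
  simp_rw [hslices]
  rw [lintegral_exp_neg_mul_exp_neg_stdGumbel ha, div_add_one (hp i).ne', sub_add_cancel,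
    one_div, inv_inv]

variable [Nonempty S]

lemma strictArgmax_eq_of_forall_lt {c g : S → ℝ} {i : S}
    (h : ∀ j ≠ i, c j + g j < c i + g i) : strictArgmax c g = i := by
  have hex : ∃ i, ∀ j ≠ i, c j + g j < c i + g i := ⟨i, h⟩
  rw [strictArgmax, dif_pos hex]
  by_contra hne
  have h1 := hex.choose_spec i (Ne.symm hne)
  have h2 := h hex.choose hne
  linarith

theorem gumbelPi_strictArgmax_eq (p : S → ℝ) (hp : ∀ s, 0 < p s) (hsum : ∑ s, p s = 1) (i : S) :
    gumbelPi S {g | strictArgmax (fun s => log (p s)) g = i} = ENNReal.ofReal (p i) := by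
  classical
  set W : S → Set (S → ℝ) := fun l => {g | ∀ j ≠ l, log (p j) + g j < log (p l) + g l}
  have hW (l : S) : gumbelPi S (W l) = ENNReal.ofReal (p l) := gumbelPi_forall_ne_lt p hp hsum l
  have hWm (l : S) : MeasurableSet (W l) := by
    simp only [W, ne_eq, ofPred_forall]
    exact .iInter fun j => .iInter fun _ => measurableSet_lt (by fun_prop) (by fun_prop)
  have hdisj : (Finset.univ.erase i : Set S).PairwiseDisjoint W := by
    intro l _ m _ hlm
    refine disjoint_left.2 fun g hgl hgm => ?_
    linarith [hgl m (Ne.symm hlm), hgm l hlm]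
  have hlower : W i ⊆ {g | strictArgmax (fun s => log (p s)) g = i} :=
    fun g hg => strictArgmax_eq_of_forall_lt hg
  have hupper : {g | strictArgmax (fun s => log (p s)) g = i}
      ⊆ (⋃ l ∈ Finset.univ.erase i, W l)ᶜ := by
    rintro g hg hmem
    obtain ⟨l, hl, hgl⟩ := mem_iUnion₂.1 hmem
    exact Finset.ne_of_mem_erase hl (hg ▸ strictArgmax_eq_of_forall_lt hgl).symm
  have hcompl : gumbelPi S (⋃ l ∈ Finset.univ.erase i, W l)ᶜ = ENNReal.ofReal (p i) := by
    rw [prob_compl_eq_one_sub (Finset.measurableSet_biUnion _ fun l _ => hWm l),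
      measure_biUnion_finset hdisj fun l _ => hWm l, Finset.sum_congr rfl fun l _ => hW l,
      ← ENNReal.ofReal_sum_of_nonneg fun l _ => (hp l).le,
      Finset.sum_erase_eq_sub (Finset.mem_univ i), hsum, ← ENNReal.ofReal_one,
      ← ENNReal.ofReal_sub _ (sub_nonneg.2 (le_one_of_sum_eq_one (fun s => (hp s).le) hsum i)),
      sub_sub_cancel]
  exact le_antisymm (hcompl ▸ measure_mono hupper) (hW i ▸ measure_mono hlower)

end Gumbel

section Trajectory

variable {S : Type*} {A : Type*}
  (ρ : S → ℝ) (K : S → A → S → ℝ) (pol : S → A)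

/-- The law of the state at time `t` given that the states before `t` were `τ 0, …, τ (t - 1)`. -/
def pathStepDist (τ : ℕ → S) : ℕ → S → ℝ
  | 0 => ρ
  | t + 1 => K (τ t) (pol (τ t))

variable {ρ K}

lemma pathStepDist_pos (hρ : ∀ s, 0 < ρ s) (hK : ∀ s a s', 0 < K s a s') (τ : ℕ → S)
    (t : ℕ) (s : S) : 0 < pathStepDist ρ K pol τ t s := by
  cases t <;> simp [pathStepDist, hρ, hK]

lemma sum_pathStepDist [Fintype S] (hρ : ∑ s, ρ s = 1) (hK : ∀ s a, ∑ s', K s a s' = 1)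
    (τ : ℕ → S) (t : ℕ) : ∑ s, pathStepDist ρ K pol τ t s = 1 := by
  cases t <;> simp [pathStepDist, hρ, hK]

lemma prod_range_pathStepDist (τ : ℕ → S) {k : ℕ} (hk : 1 ≤ k) :
    ∏ t ∈ Finset.range k, pathStepDist ρ K pol τ t (τ t)
      = ρ (τ 0) * ∏ t ∈ Finset.range (k - 1), K (τ t) (pol (τ t)) (τ (t + 1)) := by
  obtain ⟨n, rfl⟩ := Nat.exists_eq_add_of_le' hk
  rw [Finset.prod_range_succ', mul_comm]
  rfl

variable [Fintype S] [Nonempty S]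

lemma gmTraj_eq_on_iff (ω : ℕ → S → ℝ) (τ : ℕ → S) (k : ℕ) :
    (∀ t < k, gmTraj ρ K pol ω t = τ t)
      ↔ ∀ t < k, strictArgmax (fun s => log (pathStepDist ρ K pol τ t s)) (ω t) = τ t := by
  induction k with
  | zero => simp
  | succ k ih =>
    rw [Nat.forall_lt_succ_right, Nat.forall_lt_succ_right, ← ih]
    refine and_congr_right fun hprefix => ?_
    cases k with
    | zero => rfl
    | succ m => rw [gmTraj, hprefix m m.lt_succ_self]; rfl

end Trajectory

lemma Fin.prod_univ_ite_mem_range {M : Type*} [CommMonoid M] {T k : ℕ} (hkT : k ≤ T)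
    (f : ℕ → M) :
    ∏ t : Fin T, (if (t : ℕ) ∈ Finset.range k then f t else 1) = ∏ t ∈ Finset.range k, f t := by
  rw [Fin.prod_univ_eq_prod_range (fun t => if t ∈ Finset.range k then f t else 1),
    Finset.prod_ite_mem, Finset.inter_eq_right.2 (Finset.range_subset_range.2 hkT)]

lemma forall_lt_extendNoise_iff {S : Type*} {T k : ℕ} (hkT : k ≤ T) (P : ℕ → (S → ℝ) → Prop)
    (ω : Fin T → S → ℝ) :
    (∀ t < k, P t (extendNoise T ω t)) ↔ ∀ t : Fin T, (t : ℕ) < k → P t (ω t) := by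
  constructor
  · intro h t ht
    simpa [extendNoise, t.2] using h t ht
  · intro h t ht
    simpa [extendNoise, ht.trans_le hkT] using h ⟨t, ht.trans_le hkT⟩ ht

theorem gumbelMax_scm_correct_general {S : Type*} [Fintype S] [Nonempty S] {A : Type*}
    (ρ : S → ℝ) (hρpos : ∀ s, 0 < ρ s) (hρsum : ∑ s, ρ s = 1)
    (K : S → A → S → ℝ) (hKpos : ∀ s a s', 0 < K s a s')
    (hKsum : ∀ s a, ∑ s', K s a s' = 1)
    (pol : S → A) (T : ℕ)
    (k : ℕ) (hk1 : 1 ≤ k) (hkT : k ≤ T) (τ : ℕ → S) :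
    (Measure.pi (fun _ : Fin T => gumbelPi S))
        {ω : Fin T → S → ℝ | ∀ t < k, gmTraj ρ K pol (extendNoise T ω) t = τ t}
      = ENNReal.ofReal
          (ρ (τ 0) * ∏ t ∈ Finset.range (k - 1), K (τ t) (pol (τ t)) (τ (t + 1))) := by
  set P := pathStepDist ρ K pol τ
  have hcylinder : {ω : Fin T → S → ℝ | ∀ t < k, gmTraj ρ K pol (extendNoise T ω) t = τ t}
      = univ.pi fun t : Fin T => if (t : ℕ) ∈ Finset.range k
          then {g | strictArgmax (fun s => log (P t s)) g = τ t} else univ := by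
    ext ω
    rw [mem_ofPred_eq, gmTraj_eq_on_iff, forall_lt_extendNoise_iff hkT
      fun t g => strictArgmax (fun s => log (P t s)) g = τ t, mem_univ_pi]
    refine forall_congr' fun t => ?_
    split_ifs with ht <;> simp_all
  have hstep (t : Fin T) : gumbelPi S (if (t : ℕ) ∈ Finset.range k
      then {g | strictArgmax (fun s => log (P t s)) g = τ t} else univ)
      = if (t : ℕ) ∈ Finset.range k then ENNReal.ofReal (P t (τ t)) else 1 := by
    split_ifs
    · exact gumbelPi_strictArgmax_eq _ (pathStepDist_pos pol hρpos hKpos τ t)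
        (sum_pathStepDist pol hρsum hKsum τ t) _
    · exact measure_univ
  rw [hcylinder, Measure.pi_pi, Finset.prod_congr rfl fun t _ => hstep t,
    Fin.prod_univ_ite_mem_range hkT fun t => ENNReal.ofReal (P t (τ t)),
    ← ENNReal.ofReal_prod_of_nonneg fun t _ => (pathStepDist_pos pol hρpos hKpos τ t _).le,
    prod_range_pathStepDist pol τ hk1]

/-- Correctness of the Gumbel-Max SCM encoding of an MDP: for every `1 ≤ k ≤ T`
and every state sequence `τ`, the probability (under the product Gumbel noise
measure on `Fin T → S → ℝ`) that the Gumbel-Max trajectory agrees with `τ` on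
the first `k` steps equals the MDP path probability
`ρ (τ 0) * ∏_{t=0}^{k-2} K (τ t) (pol (τ t)) (τ (t+1))`. -/
theorem gumbelMax_scm_correct {S : Type*} [Fintype S] [Nonempty S] {A : Type*}
    (ρ : S → ℝ) (hρpos : ∀ s, 0 < ρ s) (hρsum : ∑ s, ρ s = 1)
    (K : S → A → S → ℝ) (hKpos : ∀ s a s', 0 < K s a s')
    (hKsum : ∀ s a, ∑ s', K s a s' = 1)
    (pol : S → A) (T : ℕ) (hT : 1 ≤ T)
    (k : ℕ) (hk1 : 1 ≤ k) (hkT : k ≤ T) (τ : ℕ → S) :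
    (Measure.pi (fun _ : Fin T => gumbelPi S))
        {ω : Fin T → S → ℝ | ∀ t < k, gmTraj ρ K pol (extendNoise T ω) t = τ t}
      = ENNReal.ofReal
          (ρ (τ 0) * ∏ t ∈ Finset.range (k - 1), K (τ t) (pol (τ t)) (τ (t + 1))) :=
  gumbelMax_scm_correct_general ρ hρpos hρsum K hKpos hKsum pol T k hk1 hkT τ
end

section
/- Deterministic counterfactual stability of the Gumbel-Max mechanism: let S be a finite nonempty type, let p and p' be strictly positive probability vectors on S, let g : S → ℝ, and let i, j ∈ S with j ≠ i. If i is the strict argmax of (log ∘ p) + g, and p' i / p i ≥ p' j / p j, then log (p' j) + g j < log (p' i) + g i; in particular, j is not a maximizer of (log ∘ p') + g, so the counterfactual outcome under p' with the same noise g cannot be j. -/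
open Real

/-- Deterministic counterfactual stability of the Gumbel-Max mechanism:
if `i` is the strict argmax of `log ∘ p + g` and the multiplicative change
`p' i / p i` is at least `p' j / p j` (`j ≠ i`), then under `p'` with the same
noise `g` the score of `j` stays strictly below that of `i`; in particular the
counterfactual outcome cannot be `j`. -/
theorem gumbelMax_counterfactual_stability {S : Type*} [Fintype S] [Nonempty S]
    (p p' : S → ℝ) (hp : ∀ s, 0 < p s) (hpsum : ∑ s, p s = 1)
    (hp' : ∀ s, 0 < p' s) (hp'sum : ∑ s, p' s = 1)
    (g : S → ℝ) (i j : S) (hij : j ≠ i)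
    (hobs : ∀ k : S, k ≠ i → Real.log (p k) + g k < Real.log (p i) + g i)
    (hratio : p' i / p i ≥ p' j / p j) :
    Real.log (p' j) + g j < Real.log (p' i) + g i := by
  have h1 := hobs j hij
  have hlog : Real.log (p' j / p j) ≤ Real.log (p' i / p i) :=
    Real.log_le_log (div_pos (hp' j) (hp j)) hratio
  rw [Real.log_div (hp' j).ne' (hp j).ne', Real.log_div (hp' i).ne' (hp i).ne'] at hlog
  linarith
end

section
/- Deterministic invariance of counterfactuals under the Gumbel-Max mechanism: let S be a finite nonempty type, let p and p' be strictly positive probability vectors on S, let g : S → ℝ, and let i ∈ S. If i is the strict argmax of (log ∘ p) + g, and p' i / p i ≥ p' j / p j holds for every j ≠ i, then i is also the strict argmax of (log ∘ p') + g; i.e., the counterfactual outcome under p' with the same noise g equals the observed outcome i. -/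
open Real

/-- Deterministic invariance of counterfactuals under the Gumbel-Max mechanism:
if `i` is the strict argmax of `log ∘ p + g` and `p' i / p i ≥ p' j / p j`
holds for every `j ≠ i`, then `i` is also the strict argmax of `log ∘ p' + g`,
i.e. the counterfactual outcome under `p'` with the same noise `g` equals the
observed outcome `i`. -/
theorem gumbelMax_counterfactual_invariance {S : Type*} [Fintype S] [Nonempty S]
    (p p' : S → ℝ) (hp : ∀ s, 0 < p s) (hpsum : ∑ s, p s = 1)
    (hp' : ∀ s, 0 < p' s) (hp'sum : ∑ s, p' s = 1)
    (g : S → ℝ) (i : S)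
    (hobs : ∀ k : S, k ≠ i → Real.log (p k) + g k < Real.log (p i) + g i)
    (hratio : ∀ j : S, j ≠ i → p' i / p i ≥ p' j / p j) :
    ∀ j : S, j ≠ i → Real.log (p' j) + g j < Real.log (p' i) + g i := by
  intro j hj
  have h1 : Real.log (p' j / p j) ≤ Real.log (p' i / p i) :=
    Real.log_le_log (div_pos (hp' j) (hp j)) (hratio j hj)
  rw [Real.log_div (ne_of_gt (hp' j)) (ne_of_gt (hp j)),
      Real.log_div (ne_of_gt (hp' i)) (ne_of_gt (hp i))] at h1
  have h2 := hobs j hj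
  linarith
end

section
/- The inverse-CDF (quantile) mechanism for categorical sampling violates counterfactual stability: there exist n ∈ ℕ, strictly positive probability vectors p and p' on Fin n, a real u ∈ (0,1), and distinct indices i, j ∈ Fin n such that Q_p(u) = i, p' i / p i ≥ p' j / p j, and Q_{p'}(u) = j. (For instance n = 3, p = (1/2, 3/10, 1/5), p' = (3/10, 1/10, 3/5), u = 7/20, i = 0, j = 1.) -/
/-!
The quantile mechanism compares `u` with cumulative sums only, so shrinking the first cell
below `u` moves the outcome from `0` to `1`, even when cell `1` shrinks proportionally more:
for `p = (1/2, 3/10, 1/5)`, `p' = (3/10, 1/10, 3/5)` and `u = 7/20` we have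
`p 0 ≥ u > p' 0` and `u ≤ p' 0 + p' 1`, while `p' 0 / p 0 = 3/5 ≥ 1/3 = p' 1 / p 1`.
-/

open Classical in
/-- The inverse-CDF (quantile) mechanism on `Fin n` with respect to the natural
order: `Qcdf p u` is the least index `i` such that `u ≤ ∑_{k ≤ i} p k`
(and `0` if no such index exists). -/
noncomputable def Qcdf {n : ℕ} [NeZero n] (p : Fin n → ℝ) (u : ℝ) : Fin n :=
  if h : (Finset.univ.filter
      (fun i : Fin n => u ≤ ∑ k ∈ Finset.Iic i, p k)).Nonempty then
    (Finset.univ.filter (fun i : Fin n => u ≤ ∑ k ∈ Finset.Iic i, p k)).min' h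
  else 0

theorem Fin.Iic_zero {n : ℕ} : Finset.Iic (0 : Fin (n + 1)) = {0} := by
  ext k
  simp

theorem Fin.Iic_one {n : ℕ} : Finset.Iic (1 : Fin (n + 2)) = {0, 1} := by
  ext k
  simp only [Finset.mem_Iic, Finset.mem_insert, Finset.mem_singleton, Fin.le_iff_val_le_val,
    Fin.ext_iff, Fin.val_one, Fin.val_zero]
  omega

theorem Qcdf_eq_of_isLeast {n : ℕ} [NeZero n] {p : Fin n → ℝ} {u : ℝ} {i : Fin n}
    (h : IsLeast {i | u ≤ ∑ k ∈ Finset.Iic i, p k} i) : Qcdf p u = i := by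
  classical
  have hne : (Finset.univ.filter fun i : Fin n => u ≤ ∑ k ∈ Finset.Iic i, p k).Nonempty :=
    ⟨i, by simpa using h.1⟩
  rw [Qcdf, dif_pos hne]
  exact (Finset.isLeast_min' _ hne).unique (by simpa using h)

theorem Qcdf_eq_zero {n : ℕ} {p : Fin (n + 1) → ℝ} {u : ℝ} (h : u ≤ p 0) : Qcdf p u = 0 :=
  Qcdf_eq_of_isLeast ⟨by simpa [Fin.Iic_zero] using h, fun k _ => Fin.zero_le k⟩

theorem Qcdf_eq_one {n : ℕ} {p : Fin (n + 2) → ℝ} {u : ℝ} (h₀ : p 0 < u)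
    (h₁ : u ≤ p 0 + p 1) : Qcdf p u = 1 := by
  refine Qcdf_eq_of_isLeast ⟨by simpa [Fin.Iic_one] using h₁, fun k hk => ?_⟩
  refine Fin.one_le_of_ne_zero fun hk₀ => ?_
  rw [hk₀] at hk
  exact (h₀.trans_le (by simpa [Fin.Iic_zero] using hk)).false

/-- The inverse-CDF (quantile) mechanism for categorical sampling violates
counterfactual stability: there are strictly positive probability vectors
`p, p'`, an exogenous value `u ∈ (0,1)`, and distinct indices `i ≠ j` with
`Qcdf p u = i`, `p' i / p i ≥ p' j / p j`, and yet `Qcdf p' u = j`. -/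
theorem inverseCDF_violates_counterfactual_stability :
    ∃ (n : ℕ) (p p' : Fin (n + 1) → ℝ) (u : ℝ) (i j : Fin (n + 1)),
      (∀ k, 0 < p k) ∧ (∑ k, p k = 1) ∧
      (∀ k, 0 < p' k) ∧ (∑ k, p' k = 1) ∧
      0 < u ∧ u < 1 ∧ i ≠ j ∧
      Qcdf p u = i ∧ p' i / p i ≥ p' j / p j ∧ Qcdf p' u = j := by
  refine ⟨2, ![1/2, 3/10, 1/5], ![3/10, 1/10, 3/5], 7/20, 0, 1, ?_, ?_, ?_, ?_, by norm_num,
    by norm_num, by decide, Qcdf_eq_zero (by norm_num), by norm_num,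
    Qcdf_eq_one (by norm_num) (by norm_num)⟩
  · intro k; fin_cases k <;> norm_num
  · norm_num [Fin.sum_univ_succ]
  · intro k; fin_cases k <;> norm_num
  · norm_num [Fin.sum_univ_succ]
end
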